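/- If a closed subset A of a space X is homologically UV^n(ℤ), where ℤ is the group of integers, then A is homologically UV^n(G) for every coefficient group G. -/

import Mathlib

noncomputable section
open Set
universe u v w w'

/-- The topological simplex associated to `x : SimplexCategory` (as in the older Mathlib). -/
def SimplexCategory.toTopObj (x : SimplexCategory) : Set (Fin (x.len + 1) → NNReal) :=
  {f | ∑ i, f i = 1}

/-- A morphism in `SimplexCategory` induces a map on the associated topological spaces
(as in the older Mathlib). -/
def SimplexCategory.toTopMap {x y : SimplexCategory} (f : x ⟶ y) (g : x.toTopObj) :
    y.toTopObj :=
  ⟨fun i => ∑ j ∈ Finset.univ.filter (fun j => f.toOrderHom j = i), g.1 j, by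
    show ∑ i, ∑ j ∈ Finset.univ.filter (fun j => f.toOrderHom j = i), g.1 j = 1
    rw [Finset.sum_fiberwise]
    exact g.2⟩

theorem SimplexCategory.continuous_toTopMap {x y : SimplexCategory} (f : x ⟶ y) :
    Continuous (SimplexCategory.toTopMap f) := by
  refine Continuous.subtype_mk (continuous_pi fun i => ?_) _
  exact continuous_finset_sum _ (fun j _ => (continuous_apply _).comp continuous_subtype_val)

/-- The topological standard `k`-simplex. -/
abbrev TDelta (k : ℕ) := (SimplexCategory.mk k).toTopObj

/-- A singular `k`-simplex in `X`. -/
abbrev SSimplex (X : Type u) [TopologicalSpace X] (k : ℕ) := C(TDelta k, X)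

/-- Singular `k`-chains of `X` with coefficients in `G`. -/
abbrev SChain (X : Type u) [TopologicalSpace X] (G : Type v) [Zero G] (k : ℕ) :=
  SSimplex X k →₀ G

variable {X : Type u} [TopologicalSpace X]

/-- The `i`-th face of a singular `(k+1)`-simplex. -/
def SSimplex.face {k : ℕ} (σ : SSimplex X (k + 1)) (i : Fin (k + 2)) : SSimplex X k :=
  σ.comp ⟨SimplexCategory.toTopMap (SimplexCategory.δ i),
    SimplexCategory.continuous_toTopMap _⟩

/-- `τ` is a face of `σ` (a restriction of `σ` to a face of the standard simplex). -/
def IsFaceOf {m k : ℕ} (τ : SSimplex X m) (σ : SSimplex X k) : Prop :=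
  ∃ f : SimplexCategory.mk m ⟶ SimplexCategory.mk k,
    Function.Injective f.toOrderHom ∧
    τ = σ.comp ⟨SimplexCategory.toTopMap f, SimplexCategory.continuous_toTopMap f⟩

theorem isFaceOf_face {k : ℕ} (σ : SSimplex X (k + 1)) (i : Fin (k + 2)) :
    IsFaceOf (σ.face i) σ :=
  ⟨SimplexCategory.δ i, Fin.succAbove_right_injective, rfl⟩

theorem IsFaceOf.dim_le {m k : ℕ} {τ : SSimplex X m} {σ : SSimplex X k}
    (h : IsFaceOf τ σ) : m ≤ k := by
  obtain ⟨f, hf, -⟩ := h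
  have := Fintype.card_le_of_injective _ hf
  simpa using this

theorem IsFaceOf.range_subset {m k : ℕ} {τ : SSimplex X m} {σ : SSimplex X k}
    (h : IsFaceOf τ σ) : Set.range τ ⊆ Set.range σ := by
  obtain ⟨f, -, rfl⟩ := h
  rintro x ⟨y, rfl⟩
  exact ⟨_, rfl⟩

/-- The boundary operator on singular chains. -/
def SBoundary (X : Type u) [TopologicalSpace X] (G : Type v) [AddCommGroup G] (k : ℕ) :
    SChain X G (k + 1) →+ SChain X G k :=
  Finsupp.liftAddHom fun σ =>
    ∑ i : Fin (k + 2), ((-1 : ℤ) ^ (i : ℕ)) • Finsupp.singleAddHom (σ.face i)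

/-- The augmentation on singular `0`-chains. -/
def SAug (X : Type u) [TopologicalSpace X] (G : Type v) [AddCommGroup G] :
    SChain X G 0 →+ G :=
  Finsupp.liftAddHom fun _ => AddMonoidHom.id G

/-- The carrier `|c|` of a singular chain: the union of the images of the singular
simplexes appearing in its irreducible representation. -/
def SCarrier {G : Type v} [Zero G] {k : ℕ} (c : SChain X G k) : Set X :=
  ⋃ σ ∈ c.support, Set.range σ

/-- A cycle of the singular chain complex, reduced in dimension `0`. -/
def IsCycle (X : Type u) [TopologicalSpace X] (G : Type v) [AddCommGroup G] :
    ∀ {k : ℕ}, SChain X G k → Prop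
  | 0, c => SAug X G c = 0
  | (k + 1), c => SBoundary X G k c = 0

/-- The vertices of a singular chain: all `0`-dimensional faces of the simplexes in its
irreducible representation. -/
def chainVertices {G : Type v} [Zero G] {k : ℕ} (c : SChain X G k) : Set (SSimplex X 0) :=
  {v | ∃ σ ∈ c.support, IsFaceOf v σ}

/-- The point `z` viewed as a singular `0`-simplex. -/
def ptSimplex {Z : Type w} [TopologicalSpace Z] (z : Z) : SSimplex Z 0 :=
  ContinuousMap.const _ z

/-- Every `k`-cycle (`k ≤ n`, reduced in dimension `0`) of `S(V;G)` bounds in `S(U;G)`;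
this expresses that the inclusion `V ↪ U` induces trivial homomorphisms
`H_k(V;G) → H_k(U;G)` for all `k ≤ n` (homology reduced in dimension `0`). -/
def HomTrivialPair (G : Type v) [AddCommGroup G] {X : Type u} [TopologicalSpace X]
    (V U : Set X) (n : ℕ) : Prop :=
  ∀ k ≤ n, ∀ c : SChain X G k, SCarrier c ⊆ V → IsCycle X G c →
    ∃ b : SChain X G (k + 1), SCarrier b ⊆ U ∧ SBoundary X G k b = c

/-- `A` is a homologically `UV^n(G)` subset of `X`. -/
def IsUVSet (G : Type v) [AddCommGroup G] {X : Type u} [TopologicalSpace X]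
    (n : ℕ) (A : Set X) : Prop :=
  ∀ U ∈ nhdsSet A, ∃ V ∈ nhdsSet A, V ⊆ U ∧ HomTrivialPair G V U n

/-- `f` is a closed homologically `UV^n(G)` surjection. -/
def IsUVMap (G : Type v) [AddCommGroup G] {X : Type u} {Y : Type w}
    [TopologicalSpace X] [TopologicalSpace Y] (n : ℕ) (f : X → Y) : Prop :=
  Continuous f ∧ IsClosedMap f ∧ Function.Surjective f ∧
    ∀ y : Y, IsUVSet G n (f ⁻¹' {y})

/-- `X` is homologically locally connected in dimension `n` with respect to `G`
(`X` is `lc^n_G`). -/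
def IsLC (G : Type v) [AddCommGroup G] (X : Type u) [TopologicalSpace X] (n : ℕ) : Prop :=
  ∀ x : X, ∀ U ∈ nhds x, ∃ V ∈ nhds x, V ⊆ U ∧ HomTrivialPair G V U n

/-- An open cover of (all of) `X`. -/
def IsOpenCover {X : Type u} [TopologicalSpace X] (𝒰 : Set (Set X)) : Prop :=
  (∀ U ∈ 𝒰, IsOpen U) ∧ ⋃₀ 𝒰 = Set.univ

/-- An open cover of the subset `W` of `X`. -/
def IsOpenCoverOn {X : Type u} [TopologicalSpace X] (𝒰 : Set (Set X)) (W : Set X) : Prop :=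
  (∀ U ∈ 𝒰, IsOpen U) ∧ ⋃₀ 𝒰 = W

/-- `𝒱` refines `𝒰`. -/
def Refines {X : Type u} (𝒱 𝒰 : Set (Set X)) : Prop := ∀ V ∈ 𝒱, ∃ U ∈ 𝒰, V ⊆ U

/-- The cover `f⁻¹(𝒰)`. -/
def preCover {X : Type u} {Y : Type w} (f : X → Y) (𝒰 : Set (Set Y)) : Set (Set X) :=
  (fun U => f ⁻¹' U) '' 𝒰

/-- Covering dimension of `X` is at most `n`: every open cover admits an open refinement
covering `X` in which no `n + 2` distinct members have a common point. -/
def CovDimLE (X : Type u) [TopologicalSpace X] (n : ℕ) : Prop :=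
  ∀ 𝒰 : Set (Set X), IsOpenCover 𝒰 → ∃ 𝒱 : Set (Set X), IsOpenCover 𝒱 ∧ Refines 𝒱 𝒰 ∧
    ∀ S : Finset (Set X), ↑S ⊆ 𝒱 → (⋂₀ (S : Set (Set X))).Nonempty → S.card ≤ n + 1
/-- A subcomplex of the singular chain complex of `Z`: a face-closed family of
singular simplexes. -/
structure SingSub (Z : Type w) [TopologicalSpace Z] where
  mem : ∀ k, Set (SSimplex Z k)
  face_mem : ∀ {m k : ℕ} {τ : SSimplex Z m} {σ : SSimplex Z k},
    IsFaceOf τ σ → σ ∈ mem k → τ ∈ mem m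

variable {Z : Type w} [TopologicalSpace Z]

/-- The full singular chain complex `S(Z;G)` viewed as a subcomplex of itself. -/
def fullSub (Z : Type w) [TopologicalSpace Z] : SingSub Z :=
  ⟨fun _ => Set.univ, fun _ _ => trivial⟩

/-- The subcomplex `S(A;G)` of simplexes with carrier inside `A`. -/
def setSub (A : Set Z) : SingSub Z :=
  ⟨fun _ => {σ | Set.range σ ⊆ A}, fun h hσ => (h.range_subset).trans hσ⟩

/-- The subcomplex `S(W,ω;G)` generated by simplexes whose carrier lies in some member
of `ω`. -/
def coverSub (ω : Set (Set Z)) : SingSub Z :=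
  ⟨fun _ => {σ | ∃ O ∈ ω, Set.range σ ⊆ O},
    fun h hσ => by obtain ⟨O, hO, hsub⟩ := hσ; exact ⟨O, hO, h.range_subset.trans hsub⟩⟩

/-- The `n`-dimensional part `S^{(n)}` of a subcomplex. -/
def truncSub (T : SingSub Z) (n : ℕ) : SingSub Z :=
  ⟨fun k => {σ | σ ∈ T.mem k ∧ k ≤ n},
    fun h hσ => ⟨T.face_mem h hσ.1, le_trans h.dim_le hσ.2⟩⟩

/-- Intersection of two subcomplexes. -/
def interSub (T T' : SingSub Z) : SingSub Z :=
  ⟨fun k => T.mem k ∩ T'.mem k,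
    fun h hσ => ⟨T.face_mem h hσ.1, T'.face_mem h hσ.2⟩⟩

/-- `T ≤ T'` for subcomplexes. -/
def SingSub.le (T T' : SingSub Z) : Prop := ∀ k, T.mem k ⊆ T'.mem k

/-- The `G`-module of `k`-chains of the subcomplex `T`, as a submodule of `S_k(Z;G)`. -/
def SingSub.sub (T : SingSub Z) (G : Type v) [CommRing G] (k : ℕ) :
    Submodule G (SChain Z G k) where
  carrier := {c | ∀ σ ∈ c.support, σ ∈ T.mem k}
  add_mem' := by
    classical
    intro a b ha hb σ hσ
    rcases Finset.mem_union.1 (Finsupp.support_add hσ) with h | h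
    exacts [ha σ h, hb σ h]
  zero_mem' := by simp
  smul_mem' := by
    intro g c hc σ hσ
    exact hc σ (Finsupp.support_smul hσ)

theorem SingSub.mem_sub {T : SingSub Z} {G : Type v} [CommRing G] {k : ℕ}
    {c : SChain Z G k} : c ∈ T.sub G k ↔ ∀ σ ∈ c.support, σ ∈ T.mem k := Iff.rfl

theorem SingSub.sub_le {T T' : SingSub Z} (h : T.le T') (G : Type v) [CommRing G] (k : ℕ) :
    T.sub G k ≤ T'.sub G k := fun _c hc => fun σ hσ => h k (hc σ hσ)

theorem SingSub.mem_full {G : Type v} [CommRing G] {k : ℕ} (c : SChain Z G k) :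
    c ∈ (fullSub Z).sub G k := fun _ _ => trivial

theorem SingSub.single_mem (T : SingSub Z) {G : Type v} [CommRing G] {k : ℕ}
    {σ : SSimplex Z k} (h : σ ∈ T.mem k) (g : G) : Finsupp.single σ g ∈ T.sub G k := by
  rw [SingSub.mem_sub]
  intro τ hτ
  have h1 : τ ∈ ({σ} : Finset (SSimplex Z k)) := Finsupp.support_single_subset hτ
  rw [Finset.mem_singleton] at h1
  subst h1; exact h

/-- The generator of `T.sub G k` given by a single simplex with coefficient `1`. -/
def SingSub.gen (T : SingSub Z) (G : Type v) [CommRing G] {k : ℕ}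
    (σ : SSimplex Z k) (h : σ ∈ T.mem k) : T.sub G k :=
  ⟨Finsupp.single σ 1, T.single_mem h 1⟩


theorem SingSub.boundary_mem (T : SingSub Z) {G : Type v} [CommRing G] {k : ℕ}
    {c : SChain Z G (k + 1)} (hc : c ∈ T.sub G (k + 1)) :
    SBoundary Z G k c ∈ T.sub G k := by
  classical
  rw [SingSub.mem_sub] at hc ⊢
  intro τ hτ
  rw [SBoundary, Finsupp.liftAddHom_apply] at hτ
  have h1 := Finsupp.support_sum hτ
  rw [Finset.mem_biUnion] at h1
  obtain ⟨σ, hσ, hτ2⟩ := h1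
  rw [AddMonoidHom.finset_sum_apply] at hτ2
  have h2 := Finsupp.support_finset_sum (s := (Finset.univ : Finset (Fin (k + 2))))
    (f := fun i : Fin (k + 2) =>
      ((((-1 : ℤ) ^ (i : ℕ)) • Finsupp.singleAddHom (σ.face i)) (c σ))) hτ2
  rw [Finset.mem_biUnion] at h2
  obtain ⟨i, -, hi⟩ := h2
  simp only [AddMonoidHom.smul_apply] at hi
  have h5 := Finsupp.support_smul hi
  have h4 : τ ∈ ({σ.face i} : Finset (SSimplex Z k)) := Finsupp.support_single_subset h5
  rw [Finset.mem_singleton] at h4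
  subst h4
  exact T.face_mem (isFaceOf_face σ i) (hc σ hσ)

section ChainMaps

variable {G : Type v} [CommRing G]

/-- A chain morphism from the subcomplex `T` of `S(Z;G)` to `S(X;G)`: a family of
`G`-homomorphisms commuting with the boundary operators and the augmentations. -/
structure SingChainMap (G : Type v) [CommRing G] {Z : Type w} [TopologicalSpace Z]
    (T : SingSub Z) (X : Type u) [TopologicalSpace X] where
  map : ∀ k, T.sub G k →ₗ[G] SChain X G k
  comm : ∀ (k : ℕ) (c : T.sub G (k + 1)),
    map k ⟨SBoundary Z G k c, T.boundary_mem c.2⟩ = SBoundary X G k (map (k + 1) c)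
  aug : ∀ c : T.sub G 0, SAug X G (map 0 c) = SAug Z G c

variable {Z : Type w} [TopologicalSpace Z] {T : SingSub Z} {X : Type u} [TopologicalSpace X]

/-- The value of a chain morphism on a single simplex of the subcomplex. -/
def SingChainMap.val (φ : SingChainMap G T X) (m : ℕ) (σ : SSimplex Z m)
    (h : σ ∈ T.mem m) : SChain X G m :=
  φ.map m (T.gen G σ h)

/-- Restriction of a chain morphism to a smaller subcomplex. -/
def SingChainMap.restrict (φ : SingChainMap G T X) {T' : SingSub Z} (h : T'.le T) :
    SingChainMap G T' X where
  map k := (φ.map k).comp (Submodule.inclusion (SingSub.sub_le h G k))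
  comm k c := φ.comm k (Submodule.inclusion (SingSub.sub_le h G (k + 1)) c)
  aug c := φ.aug (Submodule.inclusion (SingSub.sub_le h G 0) c)

/-- `φ'` (defined on the larger subcomplex) extends `φ`. -/
def SingChainMap.ExtendsMap {T' : SingSub Z} (h : T'.le T)
    (φbig : SingChainMap G T X) (φ : SingChainMap G T' X) : Prop :=
  ∀ (k : ℕ) (c : SChain Z G k) (hc : c ∈ T'.sub G k),
    φbig.map k ⟨c, SingSub.sub_le h G k hc⟩ = φ.map k ⟨c, hc⟩

end ChainMaps

section ValPredicates

variable {G : Type v} [Zero G] {Z : Type w} [TopologicalSpace Z]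
  {X : Type u} [TopologicalSpace X]

/-- Two families of values on the simplexes of `T` are `𝒰`-close. -/
def ValsClose (T : SingSub Z)
    (F₁ F₂ : ∀ (m : ℕ) (σ : SSimplex Z m), σ ∈ T.mem m → SChain X G m)
    (𝒰 : Set (Set X)) : Prop :=
  ∀ (k : ℕ) (σ : SSimplex Z k), σ ∈ T.mem k → ∃ U ∈ 𝒰,
    ∀ (m : ℕ) (τ : SSimplex Z m), IsFaceOf τ σ → ∀ hτ : τ ∈ T.mem m,
      SCarrier (F₁ m τ hτ) ∪ SCarrier (F₂ m τ hτ) ⊆ U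

/-- A family of values on the simplexes of `T` is `𝒰`-small. -/
def ValsSmall (T : SingSub Z)
    (F : ∀ (m : ℕ) (σ : SSimplex Z m), σ ∈ T.mem m → SChain X G m)
    (𝒰 : Set (Set X)) : Prop :=
  ∀ (k : ℕ) (σ : SSimplex Z k), σ ∈ T.mem k → ∃ U ∈ 𝒰,
    ∀ (m : ℕ) (τ : SSimplex Z m), IsFaceOf τ σ → ∀ hτ : τ ∈ T.mem m,
      SCarrier (F m τ hτ) ⊆ U

/-- A family of values on the simplexes of `T` is correct: each singular `0`-simplex is
sent to a singular `0`-simplex. -/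
def ValsCorrect [One G] (T : SingSub Z)
    (F : ∀ (m : ℕ) (σ : SSimplex Z m), σ ∈ T.mem m → SChain X G m) : Prop :=
  ∀ (σ : SSimplex Z 0) (hσ : σ ∈ T.mem 0), ∃ τ : SSimplex X 0,
    F 0 σ hσ = Finsupp.single τ 1

end ValPredicates

section MoreChainMaps

variable {G : Type v} [CommRing G] {Z : Type w} [TopologicalSpace Z] {T : SingSub Z}
  {X : Type u} [TopologicalSpace X]

/-- A chain morphism is continuous. -/
def SingChainMap.IsCont (φ : SingChainMap G T X) : Prop :=
  ∀ (z : Z) (hz : ptSimplex z ∈ T.mem 0) (U : Set X), IsOpen U →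
    SCarrier (φ.val 0 (ptSimplex z) hz) ⊆ U →
    ∃ V ∈ nhds z, ∀ z' ∈ V, ∀ hz' : ptSimplex z' ∈ T.mem 0,
      SCarrier (φ.val 0 (ptSimplex z') hz') ⊆ U

/-- A chain homotopy `D` between two chain morphisms `φ` and `ψ`. -/
structure SingChainHtpy {G : Type v} [CommRing G] {Z : Type w} [TopologicalSpace Z]
    {T : SingSub Z} {X : Type u} [TopologicalSpace X] (φ ψ : SingChainMap G T X) where
  map : ∀ k, T.sub G k →ₗ[G] SChain X G (k + 1)
  zero : ∀ c : T.sub G 0, SBoundary X G 0 (map 0 c) = φ.map 0 c - ψ.map 0 c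
  succ : ∀ (k : ℕ) (c : T.sub G (k + 1)),
    SBoundary X G (k + 1) (map (k + 1) c) =
      φ.map (k + 1) c - ψ.map (k + 1) c - map k ⟨SBoundary Z G k c, T.boundary_mem c.2⟩

/-- The chain homotopy `D` is `𝒰`-small. -/
def SingChainHtpy.Small {φ ψ : SingChainMap G T X} (D : SingChainHtpy φ ψ)
    (𝒰 : Set (Set X)) : Prop :=
  ∀ (k : ℕ) (σ : SSimplex Z k), σ ∈ T.mem k → ∃ U ∈ 𝒰,
    (∀ (m : ℕ) (τ : SSimplex Z m), IsFaceOf τ σ → ∀ hτ : τ ∈ T.mem m,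
      SCarrier (D.map m (T.gen G τ hτ)) ⊆ U) ∧
    (∀ v : SSimplex Z 0, IsFaceOf v σ → ∀ hv : v ∈ T.mem 0,
      SCarrier (φ.val 0 v hv) ∪ SCarrier (ψ.val 0 v hv) ⊆ U)

end MoreChainMaps

/-- The pushforward of a singular simplex along a continuous map. -/
def pushSimplex {X : Type u} {Y : Type w} [TopologicalSpace X] [TopologicalSpace Y]
    (f : C(X, Y)) {k : ℕ} (σ : SSimplex X k) : SSimplex Y k :=
  f.comp σ

/-- The chain morphism `f_♯` induced by a continuous map `f`. -/
def pushChain {X : Type u} {Y : Type w} [TopologicalSpace X] [TopologicalSpace Y]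
    (f : C(X, Y)) (G : Type v) [AddCommGroup G] (k : ℕ) :
    SChain X G k →+ SChain Y G k :=
  Finsupp.mapDomain.addMonoidHom (pushSimplex f)

section Simplicial

/-- An abstract simplicial complex on the vertex set `V`. -/
structure AbsComplex (V : Type w') where
  faces : Set (Finset V)
  nonempty_of_mem : ∀ s ∈ faces, s.Nonempty
  down_closed : ∀ s ∈ faces, ∀ t ⊆ s, t.Nonempty → t ∈ faces

/-- `K` has dimension at most `n`. -/
def AbsComplex.DimLE {V : Type w'} (K : AbsComplex V) (n : ℕ) : Prop :=
  ∀ s ∈ K.faces, s.card ≤ n + 1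

/-- Oriented simplicial `k`-chains on the vertex set `V` with coefficients in `G`
(with orientations induced by the linear order on `V`). -/
abbrev SimpChain (V : Type w') (G : Type v) [Zero G] (k : ℕ) :=
  {s : Finset V // s.card = k + 1} →₀ G

variable {V : Type w'} [LinearOrder V]

/-- The `i`-th face of a `(k+1)`-dimensional simplex. -/
def simpFace {k : ℕ} (s : {s : Finset V // s.card = k + 2}) (i : Fin (k + 2)) :
    {s : Finset V // s.card = k + 1} :=
  ⟨s.1.erase (s.1.orderIsoOfFin s.2 i), by
    rw [Finset.card_erase_of_mem (s.1.orderIsoOfFin s.2 i).2, s.2]; omega⟩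

/-- The boundary operator of the oriented chain complex `C(·;G)` on vertex set `V`. -/
def simpBoundary (V : Type w') [LinearOrder V] (G : Type v) [AddCommGroup G] (k : ℕ) :
    SimpChain V G (k + 1) →+ SimpChain V G k :=
  Finsupp.liftAddHom fun s =>
    ∑ i : Fin (k + 2), ((-1 : ℤ) ^ (i : ℕ)) • Finsupp.singleAddHom (simpFace s i)

/-- The augmentation of the oriented chain complex. -/
def simpAug (V : Type w') (G : Type v) [AddCommGroup G] : SimpChain V G 0 →+ G :=
  Finsupp.liftAddHom fun _ => AddMonoidHom.id G

/-- The `G`-module of `k`-chains of `C(K;G)`, as a submodule of the `k`-chains on `V`. -/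
def AbsComplex.sub (K : AbsComplex V) (G : Type v) [CommRing G] (k : ℕ) :
    Submodule G (SimpChain V G k) where
  carrier := {c | ∀ s ∈ c.support, s.1 ∈ K.faces}
  add_mem' := by
    classical
    intro a b ha hb s hs
    rcases Finset.mem_union.1 (Finsupp.support_add hs) with h | h
    exacts [ha s h, hb s h]
  zero_mem' := by simp
  smul_mem' := by
    intro g c hc s hs
    exact hc s (Finsupp.support_smul hs)

theorem AbsComplex.mem_sub {K : AbsComplex V} {G : Type v} [CommRing G] {k : ℕ}
    {c : SimpChain V G k} : c ∈ K.sub G k ↔ ∀ s ∈ c.support, s.1 ∈ K.faces := Iff.rfl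

theorem AbsComplex.sub_le {K L : AbsComplex V} (h : L.faces ⊆ K.faces)
    (G : Type v) [CommRing G] (k : ℕ) : L.sub G k ≤ K.sub G k :=
  fun _c hc => fun s hs => h (hc s hs)

theorem AbsComplex.single_mem (K : AbsComplex V) {G : Type v} [CommRing G] {k : ℕ}
    {s : {s : Finset V // s.card = k + 1}} (h : s.1 ∈ K.faces) (g : G) :
    Finsupp.single s g ∈ K.sub G k := by
  rw [AbsComplex.mem_sub]
  intro t ht
  have h1 : t ∈ ({s} : Finset {s : Finset V // s.card = k + 1}) :=
    Finsupp.support_single_subset ht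
  rw [Finset.mem_singleton] at h1
  subst h1; exact h

/-- The generator of `K.sub G k` given by a single simplex with coefficient `1`. -/
def AbsComplex.gen (K : AbsComplex V) (G : Type v) [CommRing G] {k : ℕ}
    (s : Finset V) (hcard : s.card = k + 1) (h : s ∈ K.faces) : K.sub G k :=
  ⟨Finsupp.single ⟨s, hcard⟩ 1, K.single_mem h 1⟩

theorem AbsComplex.boundary_mem (K : AbsComplex V) {G : Type v} [CommRing G] {k : ℕ}
    {c : SimpChain V G (k + 1)} (hc : c ∈ K.sub G (k + 1)) :
    simpBoundary V G k c ∈ K.sub G k := by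
  classical
  rw [AbsComplex.mem_sub] at hc ⊢
  intro t ht
  rw [simpBoundary, Finsupp.liftAddHom_apply] at ht
  have h1 := Finsupp.support_sum ht
  rw [Finset.mem_biUnion] at h1
  obtain ⟨s, hs, ht2⟩ := h1
  rw [AddMonoidHom.finset_sum_apply] at ht2
  have h2 := Finsupp.support_finset_sum (s := (Finset.univ : Finset (Fin (k + 2))))
    (f := fun i : Fin (k + 2) =>
      ((((-1 : ℤ) ^ (i : ℕ)) • Finsupp.singleAddHom (simpFace s i)) (c s))) ht2
  rw [Finset.mem_biUnion] at h2
  obtain ⟨i, -, hi⟩ := h2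
  simp only [AddMonoidHom.smul_apply] at hi
  have h5 := Finsupp.support_smul hi
  have h4 : t ∈ ({simpFace s i} : Finset {s : Finset V // s.card = k + 1}) :=
    Finsupp.support_single_subset h5
  rw [Finset.mem_singleton] at h4
  subst h4
  refine K.down_closed s.1 (hc s hs) _ (Finset.erase_subset _ _) ?_
  rw [← Finset.card_pos, (simpFace s i).2]
  exact Nat.succ_pos k

section SimpMaps

variable {G : Type v} [CommRing G] {V : Type w'} [LinearOrder V]
  {X : Type u} [TopologicalSpace X]

/-- A chain morphism from the oriented chain complex `C(K;G)` to `S(X;G)`. -/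
structure SimpToSing (G : Type v) [CommRing G] {V : Type w'} [LinearOrder V]
    (K : AbsComplex V) (X : Type u) [TopologicalSpace X] where
  map : ∀ k, K.sub G k →ₗ[G] SChain X G k
  comm : ∀ (k : ℕ) (c : K.sub G (k + 1)),
    map k ⟨simpBoundary V G k c, K.boundary_mem c.2⟩ = SBoundary X G k (map (k + 1) c)
  aug : ∀ c : K.sub G 0, SAug X G (map 0 c) = simpAug V G c

/-- The value of such a chain morphism on a single simplex of `K`. -/
def SimpToSing.val {K : AbsComplex V} (φ : SimpToSing G K X) (m : ℕ) (s : Finset V)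
    (hcard : s.card = m + 1) (h : s ∈ K.faces) : SChain X G m :=
  φ.map m (K.gen G s hcard h)

/-- Restriction of such a chain morphism to a subcomplex. -/
def SimpToSing.restrict {K : AbsComplex V} (φ : SimpToSing G K X) {L : AbsComplex V}
    (h : L.faces ⊆ K.faces) : SimpToSing G L X where
  map k := (φ.map k).comp (Submodule.inclusion (AbsComplex.sub_le h G k))
  comm k c := φ.comm k (Submodule.inclusion (AbsComplex.sub_le h G (k + 1)) c)
  aug c := φ.aug (Submodule.inclusion (AbsComplex.sub_le h G 0) c)

/-- `φbig` (defined on `K`) extends `φ` (defined on the subcomplex `L`). -/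
def SimpToSing.ExtendsMap {K L : AbsComplex V} (h : L.faces ⊆ K.faces)
    (φbig : SimpToSing G K X) (φ : SimpToSing G L X) : Prop :=
  ∀ (k : ℕ) (c : SimpChain V G k) (hc : c ∈ L.sub G k),
    φbig.map k ⟨c, AbsComplex.sub_le h G k hc⟩ = φ.map k ⟨c, hc⟩

/-- Two families of values on the simplexes of `K` are `𝒰`-close. -/
def SimpValsClose (K : AbsComplex V)
    (F₁ F₂ : ∀ (m : ℕ) (s : Finset V), s.card = m + 1 → s ∈ K.faces → SChain X G m)
    (𝒰 : Set (Set X)) : Prop :=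
  ∀ (k : ℕ) (s : Finset V) (_hs : s.card = k + 1), s ∈ K.faces → ∃ U ∈ 𝒰,
    ∀ (m : ℕ) (t : Finset V) (ht : t.card = m + 1), t ⊆ s → ∀ htK : t ∈ K.faces,
      SCarrier (F₁ m t ht htK) ∪ SCarrier (F₂ m t ht htK) ⊆ U

/-- A family of values on the simplexes of `K` is `𝒰`-small. -/
def SimpValsSmall (K : AbsComplex V)
    (F : ∀ (m : ℕ) (s : Finset V), s.card = m + 1 → s ∈ K.faces → SChain X G m)
    (𝒰 : Set (Set X)) : Prop :=
  ∀ (k : ℕ) (s : Finset V) (_hs : s.card = k + 1), s ∈ K.faces → ∃ U ∈ 𝒰,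
    ∀ (m : ℕ) (t : Finset V) (ht : t.card = m + 1), t ⊆ s → ∀ htK : t ∈ K.faces,
      SCarrier (F m t ht htK) ⊆ U

/-- A family of values is correct: every vertex is sent to a singular `0`-simplex. -/
def SimpValsCorrect (K : AbsComplex V)
    (F : ∀ (m : ℕ) (s : Finset V), s.card = m + 1 → s ∈ K.faces → SChain X G m) : Prop :=
  ∀ (s : Finset V) (hs : s.card = 0 + 1) (hK : s ∈ K.faces),
    ∃ τ : SSimplex X 0, F 0 s hs hK = Finsupp.single τ 1

/-- A chain morphism `φ : C(L;G) → S(X;G)` is a partial algebraic realization of `C(K;G)`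
in the open cover `𝒰` (where `L` is a subcomplex of `K`). -/
def IsPartialRealization {K L : AbsComplex V} (_hLK : L.faces ⊆ K.faces)
    (φ : SimpToSing G L X) (𝒰 : Set (Set X)) : Prop :=
  ∀ (k : ℕ) (s : Finset V) (_hs : s.card = k + 1), s ∈ K.faces → ∃ U ∈ 𝒰,
    ∀ (m : ℕ) (t : Finset V) (ht : t.card = m + 1), t ⊆ s → ∀ htL : t ∈ L.faces,
      SCarrier (φ.val m t ht htL) ⊆ U

/-- `L` contains all vertices of `K`. -/
def ContainsVertices {V : Type w'} (L K : AbsComplex V) : Prop :=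
  ∀ v : V, {v} ∈ K.faces → {v} ∈ L.faces

/-- A chain homotopy between two chain morphisms `C(K;G) → S(X;G)`. -/
structure SimpChainHtpy {K : AbsComplex V} (φ ψ : SimpToSing G K X) where
  map : ∀ k, K.sub G k →ₗ[G] SChain X G (k + 1)
  zero : ∀ c : K.sub G 0, SBoundary X G 0 (map 0 c) = φ.map 0 c - ψ.map 0 c
  succ : ∀ (k : ℕ) (c : K.sub G (k + 1)),
    SBoundary X G (k + 1) (map (k + 1) c) =
      φ.map (k + 1) c - ψ.map (k + 1) c - map k ⟨simpBoundary V G k c, K.boundary_mem c.2⟩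

/-- The chain homotopy is `𝒰`-small. -/
def SimpChainHtpy.Small {K : AbsComplex V} {φ ψ : SimpToSing G K X}
    (D : SimpChainHtpy φ ψ) (𝒰 : Set (Set X)) : Prop :=
  ∀ (k : ℕ) (s : Finset V) (_hs : s.card = k + 1), s ∈ K.faces → ∃ U ∈ 𝒰,
    (∀ (m : ℕ) (t : Finset V) (ht : t.card = m + 1), t ⊆ s → ∀ htK : t ∈ K.faces,
      SCarrier (D.map m (K.gen G t ht htK)) ⊆ U) ∧
    (∀ v : V, v ∈ s → ∀ hv : {v} ∈ K.faces,
      SCarrier (φ.val 0 {v} (Finset.card_singleton v) hv) ∪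
        SCarrier (ψ.val 0 {v} (Finset.card_singleton v) hv) ⊆ U)

/-- A chain morphism from a subcomplex `T` of `S(Y;G)` to the oriented chain complex
`C(K;G)`. -/
structure SingToSimp (G : Type v) [CommRing G] {Y : Type w} [TopologicalSpace Y]
    (T : SingSub Y) {V : Type w'} [LinearOrder V] (K : AbsComplex V) where
  map : ∀ k, T.sub G k →ₗ[G] SimpChain V G k
  mem : ∀ (k : ℕ) (c : T.sub G k), map k c ∈ K.sub G k
  comm : ∀ (k : ℕ) (c : T.sub G (k + 1)),
    map k ⟨SBoundary Y G k c, T.boundary_mem c.2⟩ = simpBoundary V G k (map (k + 1) c)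
  aug : ∀ c : T.sub G 0, simpAug V G (map 0 c) = SAug Y G c

end SimpMaps

open Topology

/-- `X` is an absolute neighborhood algebraic `G`-retract (an algebraic `ANR_G`):
every open cover `𝒰` has an open refinement `𝒱` such that every correct partial
algebraic realization of `C(K;G)` in `𝒱` extends to a full algebraic realization of
`C(K;G)` in `𝒰`. -/
def IsAlgANR (G : Type v) [CommRing G] (X : Type u) [MetricSpace X] : Prop :=
  ∀ 𝒰 : Set (Set X), IsOpenCover 𝒰 → ∃ 𝒱 : Set (Set X), IsOpenCover 𝒱 ∧ Refines 𝒱 𝒰 ∧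
    ∀ (V : Type w') (_ : LinearOrder V) (K L : AbsComplex V) (hLK : L.faces ⊆ K.faces),
      ContainsVertices L K → ∀ φ : SimpToSing G L X, SimpValsCorrect L φ.val →
        IsPartialRealization hLK φ 𝒱 →
        ∃ ψ : SimpToSing G K X, ψ.ExtendsMap hLK φ ∧ SimpValsSmall K ψ.val 𝒰

/-- `A` is a neighborhood algebraic `G`-retract of `M`: there are a neighborhood `U` of
`A`, an open cover `𝒰` of `U` and a chain morphism `μ : S(U,𝒰;G) → S(A;G)` which is the
identity on `S(A;G) ∩ S(U,𝒰;G)` and which is "continuous at `A`" in the sense of (ii). -/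
def IsNbhdAlgRetract (G : Type v) [CommRing G] {M : Type u} [TopologicalSpace M]
    (A : Set M) : Prop :=
  ∃ U : Set M, IsOpen U ∧ A ⊆ U ∧ ∃ 𝒰 : Set (Set M), IsOpenCoverOn 𝒰 U ∧
    ∃ μ : SingChainMap G (coverSub 𝒰) M,
      (∀ (k : ℕ) (c : SChain M G k) (hc : c ∈ (coverSub 𝒰).sub G k),
        SCarrier (μ.map k ⟨c, hc⟩) ⊆ A) ∧
      (∀ (k : ℕ) (c : SChain M G k) (hc : c ∈ (coverSub 𝒰).sub G k),
        c ∈ (setSub A).sub G k → μ.map k ⟨c, hc⟩ = c) ∧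
      (∀ x ∈ A, ∀ Vx ∈ nhdsWithin x A, ∃ Wx ∈ nhds x, Wx ⊆ U ∧
        ∀ (k : ℕ) (c : SChain M G k) (hc : c ∈ (coverSub 𝒰).sub G k),
          SCarrier c ⊆ Wx → SCarrier (μ.map k ⟨c, hc⟩) ⊆ Vx)

/-- `X` is a (metric) absolute neighborhood retract: whenever `X` is embedded as a closed
subset of a metric space `M`, some neighborhood of it retracts onto it. -/
def IsMetricANR (X : Type u) [MetricSpace X] : Prop :=
  ∀ (M : Type max u w) (_ : MetricSpace M) (e : X → M), IsClosedEmbedding e →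
    ∃ W : Set M, IsOpen W ∧ Set.range e ⊆ W ∧
      ∃ r : W → M, Continuous r ∧ (∀ w : W, r w ∈ Set.range e) ∧
        ∀ (x : X) (h : e x ∈ W), r ⟨e x, h⟩ = e x

/-- `X` is an approximate absolute neighborhood `G`-retract (an `AANR_G`). -/
def IsAANR (G : Type v) [CommRing G] (X : Type u) [MetricSpace X] : Prop :=
  ∀ (Y : Type max u w) (_ : MetricSpace Y) (e : X → Y), IsClosedEmbedding e →
    ∀ 𝒰 : Set (Set X), IsOpenCover 𝒰 →
      ∃ W : Set Y, IsOpen W ∧ Set.range e ⊆ W ∧ ∃ α : Set (Set Y), IsOpenCoverOn α W ∧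
        ∃ φ : SingChainMap G (coverSub α) Y,
          (∀ (k : ℕ) (c : SChain Y G k) (hc : c ∈ (coverSub α).sub G k),
            SCarrier (φ.map k ⟨c, hc⟩) ⊆ Set.range e) ∧
          ValsClose (interSub (setSub (Set.range e)) (coverSub α))
            (fun m σ h => φ.map m ((coverSub α).gen G σ h.2))
            (fun _m σ _ => Finsupp.single σ 1)
            ((fun (U : Set X) => e '' U) '' 𝒰)

/-- `Y` has the approximate `lc^n_G`-property. -/
def ApproxLC (G : Type v) [AddCommGroup G] (Y : Type u) [TopologicalSpace Y] (n : ℕ) : Prop :=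
  ∀ y : Y, ∀ U ∈ nhds y, ∃ V ∈ nhds y, ∃ W ∈ nhds y, V ⊆ W ∧
    ∀ k ≤ n, ∀ c : SChain Y G k, SCarrier c ⊆ V → IsCycle Y G c →
      ∃ c' : SChain Y G k, SCarrier c' ⊆ W ∧ IsCycle Y G c' ∧
        chainVertices c' = chainVertices c ∧
        ∃ b : SChain Y G (k + 1), SCarrier b ⊆ U ∧ SBoundary Y G k b = c'

theorem setSub_le_full {Z : Type w} [TopologicalSpace Z] (A : Set Z) :
    (setSub A).le (fullSub Z) := fun _ _ _ => trivial

theorem truncSetSub_le_truncFull {Z : Type w} [TopologicalSpace Z] (A : Set Z) (n : ℕ) :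
    (truncSub (setSub A) n).le (truncSub (fullSub Z) n) :=
  fun _k _σ h => ⟨trivial, h.2⟩

theorem interSub_le_left {Z : Type w} [TopologicalSpace Z] (T T' : SingSub Z) :
    (interSub T T').le T := fun _k _σ h => h.1

theorem interSub_le_right {Z : Type w} [TopologicalSpace Z] (T T' : SingSub Z) :
    (interSub T T').le T' := fun _k _σ h => h.2

/-- A chain morphism `φ`, defined on the subcomplex `L` of the singular complex `Kc` of
`P` (where `L` contains all `0`-simplexes of `Kc`), is a partial singular realization of
`Kc` in the open cover `𝒰`. -/
def IsPartialSingRealization {G : Type v} [CommRing G] {P : Type w} [TopologicalSpace P]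
    {X : Type u} [TopologicalSpace X] {Kc L : SingSub P} (_hL : L.le Kc)
    (φ : SingChainMap G L X) (𝒰 : Set (Set X)) : Prop :=
  ∀ (k : ℕ) (σ : SSimplex P k), σ ∈ Kc.mem k → ∃ U ∈ 𝒰,
    ∀ (m : ℕ) (τ : SSimplex P m), IsFaceOf τ σ → ∀ hτ : τ ∈ L.mem m,
      SCarrier (φ.val m τ hτ) ⊆ U

/-!
A `G`-cycle `c` is the image, under some `π : F → G` with `F` free abelian of finite rank, of a
chain `c₀`. The boundary of `c₀` has coefficients in `ker π`, again free of finite rank, so the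
`ℤ`-hypothesis, applied coordinatewise, makes it bound in a larger neighbourhood; subtracting the
bounding chain turns `c₀` into an `F`-cycle over `c`, which bounds by the `ℤ`-hypothesis again.
Hence nested `ℤ`-trivial inclusions `V ⊆ W ⊆ U` give a `G`-trivial inclusion `V ⊆ U`.
-/

section SimplicialIdentities

open CategoryTheory Opposite

theorem SimplexCategory.toTopMap_id (x : SimplexCategory) (p : x.toTopObj) :
    SimplexCategory.toTopMap (𝟙 x) p = p := by
  apply Subtype.ext; funext i
  simp [SimplexCategory.toTopMap, Finset.sum_filter]

theorem SimplexCategory.toTopMap_comp {x y z : SimplexCategory} (f : x ⟶ y) (g : y ⟶ z)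
    (p : x.toTopObj) :
    SimplexCategory.toTopMap (f ≫ g) p =
      SimplexCategory.toTopMap g (SimplexCategory.toTopMap f p) := by
  apply Subtype.ext; funext i
  simp only [SimplexCategory.toTopMap, Finset.sum_filter, Finset.ite_sum_zero]
  rw [Finset.sum_comm]
  refine Finset.sum_congr rfl fun j _ => ?_
  rw [Finset.sum_eq_single (f.toOrderHom j)]
  · simp [SimplexCategory.comp_toOrderHom]
  · intro l _ hl; simp [Ne.symm hl]
  · simp

def SSimplex.precomp {m k : ℕ} (f : SimplexCategory.mk m ⟶ SimplexCategory.mk k)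
    (σ : SSimplex X k) : SSimplex X m :=
  σ.comp ⟨_, SimplexCategory.continuous_toTopMap f⟩

theorem SSimplex.precomp_id (k : ℕ) :
    SSimplex.precomp (X := X) (𝟙 (SimplexCategory.mk k)) = id := by
  funext σ; ext p; simp [SSimplex.precomp, SimplexCategory.toTopMap_id]

theorem SSimplex.precomp_comp {l m k : ℕ} (f : SimplexCategory.mk l ⟶ SimplexCategory.mk m)
    (g : SimplexCategory.mk m ⟶ SimplexCategory.mk k) :
    SSimplex.precomp (X := X) (f ≫ g) = SSimplex.precomp f ∘ SSimplex.precomp g := by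
  funext σ; ext p; simp [SSimplex.precomp, SimplexCategory.toTopMap_comp]

-- `S(X;G)` as a simplicial abelian group, so that `∂ ∘ ∂ = 0` is
-- `AlternatingFaceMapComplex.d_squared`.
variable (X) in
def singularChainObject (G : Type v) [AddCommGroup G] :
    SimplicialObject AddCommGrpCat.{max u v} where
  obj x := AddCommGrpCat.of (SChain X G x.unop.len)
  map f := AddCommGrpCat.ofHom (Finsupp.mapDomain.addMonoidHom (SSimplex.precomp f.unop))
  map_id x := by
    change AddCommGrpCat.ofHom _ = AddCommGrpCat.ofHom _
    rw [unop_id, SSimplex.precomp_id, Finsupp.mapDomain.addMonoidHom_id]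
  map_comp f g := by
    change AddCommGrpCat.ofHom _ = AddCommGrpCat.ofHom _
    rw [unop_comp, SSimplex.precomp_comp, Finsupp.mapDomain.addMonoidHom_comp]

theorem AddCommGrpCat.hom_finsetSum {M N : AddCommGrpCat.{u}} {ι : Type v} (s : Finset ι)
    (f : ι → (M ⟶ N)) : (∑ i ∈ s, f i).hom = ∑ i ∈ s, (f i).hom :=
  map_sum AddCommGrpCat.homAddEquiv f s

theorem SBoundary_eq_hom_objD (G : Type v) [AddCommGroup G] (k : ℕ) :
    SBoundary X G k =
      (AlgebraicTopology.AlternatingFaceMapComplex.objD (singularChainObject X G) k).hom := by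
  have : (AlgebraicTopology.AlternatingFaceMapComplex.objD (singularChainObject X G) k).hom =
      ∑ i : Fin (k + 2), (-1 : ℤ) ^ (i : ℕ) •
        (Finsupp.mapDomain.addMonoidHom (SSimplex.precomp (X := X) (SimplexCategory.δ i)) :
          SChain X G (k + 1) →+ SChain X G k) := by
    rw [AlgebraicTopology.AlternatingFaceMapComplex.objD, AddCommGrpCat.hom_finsetSum]; rfl
  rw [this]
  refine Finsupp.addHom_ext fun σ g => ?_
  simp [SBoundary, SSimplex.face, SSimplex.precomp, AddMonoidHom.finsetSum_apply]

theorem SBoundary_SBoundary {G : Type v} [AddCommGroup G] {k : ℕ} (c : SChain X G (k + 2)) :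
    SBoundary X G k (SBoundary X G (k + 1) c) = 0 := by
  rw [SBoundary_eq_hom_objD, SBoundary_eq_hom_objD]
  exact congrArg (fun φ => AddCommGrpCat.Hom.hom φ c)
    (AlgebraicTopology.AlternatingFaceMapComplex.d_squared (singularChainObject X G) k)

end SimplicialIdentities

section Coefficients

variable {G : Type v} {G' : Type w'} {G'' : Type w} [AddCommGroup G] [AddCommGroup G']
  [AddCommGroup G'']

def SChain.mapCoeff (f : G →+ G') {k : ℕ} : SChain X G k →+ SChain X G' k :=
  Finsupp.mapRange.addMonoidHom f

namespace SChain

@[simp]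
theorem mapCoeff_apply (f : G →+ G') {k : ℕ} (c : SChain X G k) (σ : SSimplex X k) :
    mapCoeff f c σ = f (c σ) := rfl

@[simp]
theorem mapCoeff_single (f : G →+ G') {k : ℕ} (σ : SSimplex X k) (g : G) :
    mapCoeff f (Finsupp.single σ g) = Finsupp.single σ (f g) :=
  Finsupp.mapRange_single (hf := f.map_zero)

theorem mapCoeff_mapCoeff (f : G →+ G') (g : G' →+ G'') {k : ℕ} (c : SChain X G k) :
    mapCoeff g (mapCoeff f c) = mapCoeff (g.comp f) c := by
  ext σ; rfl

theorem mapCoeff_id {k : ℕ} (c : SChain X G k) : mapCoeff (AddMonoidHom.id G) c = c := by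
  ext σ; rfl

theorem support_mapCoeff_subset (f : G →+ G') {k : ℕ} (c : SChain X G k) :
    (mapCoeff f c).support ⊆ c.support :=
  Finsupp.support_mapRange (hf := f.map_zero)

end SChain

open SChain

theorem SCarrier_subset_iff {k : ℕ} {c : SChain X G k} {W : Set X} :
    SCarrier c ⊆ W ↔ ∀ σ ∈ c.support, Set.range σ ⊆ W :=
  Set.iUnion₂_subset_iff

theorem range_subset_SCarrier {k : ℕ} {c : SChain X G k} {σ : SSimplex X k}
    (hσ : σ ∈ c.support) : Set.range σ ⊆ SCarrier c :=
  fun _ hx => Set.mem_iUnion₂.2 ⟨σ, hσ, hx⟩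

theorem SCarrier_mono {k : ℕ} {c : SChain X G k} {d : SChain X G' k}
    (h : c.support ⊆ d.support) : SCarrier c ⊆ SCarrier d :=
  SCarrier_subset_iff.2 fun _ hσ => range_subset_SCarrier (h hσ)

theorem SCarrier_mapCoeff_subset (f : G →+ G') {k : ℕ} (c : SChain X G k) :
    SCarrier (mapCoeff f c) ⊆ SCarrier c :=
  SCarrier_mono (support_mapCoeff_subset f c)

theorem SCarrier_mapCoeff_of_injective {f : G →+ G'} (hf : Function.Injective f) {k : ℕ}
    (c : SChain X G k) : SCarrier (mapCoeff f c) = SCarrier c := by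
  have : (mapCoeff f c).support = c.support :=
    Finsupp.support_mapRange_of_injective f.map_zero c hf
  rw [SCarrier, SCarrier, this]

theorem SCarrier_single_subset {k : ℕ} (σ : SSimplex X k) (g : G) :
    SCarrier (Finsupp.single σ g) ⊆ Set.range σ :=
  SCarrier_subset_iff.2 fun τ hτ => by
    rw [Finset.mem_singleton.1 (Finsupp.support_single_subset hτ)]

theorem SCarrier_sub_subset {k : ℕ} {c d : SChain X G k} {W : Set X} (hc : SCarrier c ⊆ W)
    (hd : SCarrier d ⊆ W) : SCarrier (c - d) ⊆ W := by
  classical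
  refine SCarrier_subset_iff.2 fun σ hσ => ?_
  rcases Finset.mem_union.1 (Finsupp.support_sub hσ) with h | h
  exacts [SCarrier_subset_iff.1 hc σ h, SCarrier_subset_iff.1 hd σ h]

theorem SCarrier_sum_subset {ι : Type*} {k : ℕ} {s : Finset ι} {f : ι → SChain X G k}
    {W : Set X} (h : ∀ i ∈ s, SCarrier (f i) ⊆ W) : SCarrier (∑ i ∈ s, f i) ⊆ W := by
  classical
  refine SCarrier_subset_iff.2 fun σ hσ => ?_
  obtain ⟨i, hi, hσi⟩ := Finset.mem_biUnion.1 (Finsupp.support_finsetSum hσ)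
  exact SCarrier_subset_iff.1 (h i hi) σ hσi

end Coefficients

section Boundary

variable {G : Type v} {G' : Type w'} [AddCommGroup G] [AddCommGroup G']

open SChain

theorem SBoundary_single {k : ℕ} (σ : SSimplex X (k + 1)) (g : G) :
    SBoundary X G k (Finsupp.single σ g) =
      ∑ i : Fin (k + 2), ((-1 : ℤ) ^ (i : ℕ)) • Finsupp.single (σ.face i) g := by
  simp [SBoundary, AddMonoidHom.finsetSum_apply]

theorem SAug_single (σ : SSimplex X 0) (g : G) : SAug X G (Finsupp.single σ g) = g := by
  simp [SAug]

theorem SBoundary_mapCoeff (f : G →+ G') {k : ℕ} (c : SChain X G (k + 1)) :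
    SBoundary X G' k (mapCoeff f c) = mapCoeff f (SBoundary X G k c) := by
  refine DFunLike.congr_fun (Finsupp.addHom_ext (f := (SBoundary X G' k).comp (mapCoeff f))
    (g := (mapCoeff f).comp (SBoundary X G k)) fun σ g => ?_) c
  simp [SBoundary_single, map_zsmul]

theorem SAug_mapCoeff (f : G →+ G') (c : SChain X G 0) :
    SAug X G' (mapCoeff f c) = f (SAug X G c) := by
  refine DFunLike.congr_fun (Finsupp.addHom_ext (f := (SAug X G').comp (mapCoeff f))
    (g := f.comp (SAug X G)) fun σ g => ?_) c
  simp [SAug_single]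

theorem SAug_SBoundary (c : SChain X G 1) : SAug X G (SBoundary X G 0 c) = 0 := by
  refine DFunLike.congr_fun (Finsupp.addHom_ext (f := (SAug X G).comp (SBoundary X G 0))
    (g := 0) fun σ g => ?_) c
  simp [SBoundary_single, SAug_single, Fin.sum_univ_two]

theorem SCarrier_SBoundary_subset {k : ℕ} (c : SChain X G (k + 1)) :
    SCarrier (SBoundary X G k c) ⊆ SCarrier c := by
  conv_lhs => rw [← Finsupp.sum_single c, Finsupp.sum, map_sum]
  refine SCarrier_sum_subset fun σ hσ => ?_
  rw [SBoundary_single]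
  refine SCarrier_sum_subset fun i _ => ?_
  refine (SCarrier_mono (Finsupp.support_smul)).trans ?_
  exact (SCarrier_single_subset _ _).trans
    ((isFaceOf_face σ i).range_subset.trans (range_subset_SCarrier hσ))

theorem isCycle_SBoundary {k : ℕ} (c : SChain X G (k + 1)) :
    IsCycle X G (SBoundary X G k c) := by
  cases k with
  | zero => exact SAug_SBoundary c
  | succ m => exact SBoundary_SBoundary c

theorem IsCycle.mapCoeff {k : ℕ} {c : SChain X G k} (h : IsCycle X G c) (f : G →+ G') :
    IsCycle X G' (mapCoeff f c) := by
  cases k with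
  | zero => exact (SAug_mapCoeff f c).trans (by rw [show SAug X G c = 0 from h, map_zero])
  | succ m =>
    exact (SBoundary_mapCoeff f c).trans (by rw [show SBoundary X G m c = 0 from h, map_zero])

theorem isCycle_of_mapCoeff {f : G →+ G'} (hf : Function.Injective f) {k : ℕ}
    {c : SChain X G k} (h : IsCycle X G' (mapCoeff f c)) : IsCycle X G c := by
  cases k with
  | zero =>
    refine (injective_iff_map_eq_zero f).1 hf _ ?_
    rw [← SAug_mapCoeff]; exact h
  | succ m =>
    show SBoundary X G m c = 0
    refine (injective_iff_map_eq_zero (mapCoeff (X := X) (k := m) f)).1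
      (Finsupp.mapRange_injective f f.map_zero hf) _ ?_
    rw [← SBoundary_mapCoeff]; exact h

end Boundary

section TrivialPairs

variable {V U : Set X} {n : ℕ} {G : Type v} {G' : Type w'} [AddCommGroup G] [AddCommGroup G']

open SChain

theorem HomTrivialPair.of_retract (h : HomTrivialPair G' V U n) (i : G →+ G') (r : G' →+ G)
    (hri : r.comp i = AddMonoidHom.id G) : HomTrivialPair G V U n := by
  intro k hk c hcV hc
  obtain ⟨b, hbU, hb⟩ :=
    h k hk (mapCoeff i c) ((SCarrier_mapCoeff_subset i c).trans hcV) (hc.mapCoeff i)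
  refine ⟨mapCoeff r b, (SCarrier_mapCoeff_subset r b).trans hbU, ?_⟩
  rw [SBoundary_mapCoeff, hb, mapCoeff_mapCoeff, hri, mapCoeff_id]

theorem HomTrivialPair.pi {ι : Type*} [Fintype ι] {G : ι → Type*} [∀ i, AddCommGroup (G i)]
    (h : ∀ i, HomTrivialPair (G i) V U n) : HomTrivialPair (∀ i, G i) V U n := by
  classical
  intro k hk c hcV hc
  choose b hbU hb using fun i => h i k hk (mapCoeff (Pi.evalAddMonoidHom G i) c)
    ((SCarrier_mapCoeff_subset _ c).trans hcV) (hc.mapCoeff _)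
  refine ⟨∑ i, mapCoeff (AddMonoidHom.single G i) (b i),
    SCarrier_sum_subset fun i _ => (SCarrier_mapCoeff_subset _ _).trans (hbU i), ?_⟩
  simp_rw [map_sum, SBoundary_mapCoeff, hb]
  ext σ j
  simp [Finset.sum_apply]

theorem HomTrivialPair.of_addEquiv_pi (h : HomTrivialPair ℤ V U n) {ι : Type*} [Fintype ι]
    (e : G ≃+ (ι → ℤ)) : HomTrivialPair G V U n :=
  (HomTrivialPair.pi fun _ => h).of_retract e.toAddMonoidHom e.symm.toAddMonoidHom
    (by ext; simp)

end TrivialPairs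

section Lifting

variable {G : Type v} {F : Type w'} [AddCommGroup G] [AddCommGroup F]

open SChain

theorem exists_mapCoeff_eq {k : ℕ} (c : SChain X G k) :
    ∃ (π : (c.support → ℤ) →ₗ[ℤ] G) (c₀ : SChain X (c.support → ℤ) k),
      SCarrier c₀ ⊆ SCarrier c ∧ mapCoeff π.toAddMonoidHom c₀ = c := by
  classical
  refine ⟨Fintype.linearCombination ℤ fun σ : c.support => c σ,
    ∑ σ : c.support, Finsupp.single (σ : SSimplex X k) (Pi.single σ 1), ?_, ?_⟩
  · exact SCarrier_sum_subset fun σ _ =>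
      (SCarrier_single_subset _ _).trans (range_subset_SCarrier σ.2)
  · rw [map_sum]
    simp only [mapCoeff_single, LinearMap.toAddMonoidHom_coe,
      Fintype.linearCombination_apply_single, one_smul]
    exact (Finset.sum_coe_sort c.support fun σ => Finsupp.single σ (c σ)).trans c.sum_single

theorem Submodule.exists_mapCoeff_subtype_eq {R : Type*} [Ring R] [Module R F]
    (K : Submodule R F) {k : ℕ} {c : SChain X F k} (h : ∀ σ, c σ ∈ K) :
    ∃ c' : SChain X K k, mapCoeff K.subtype.toAddMonoidHom c' = c :=
  ⟨Finsupp.onFinset c.support (fun σ => ⟨c σ, h σ⟩)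
    fun σ hσ => Finsupp.mem_support_iff.2 fun h0 => hσ (Subtype.ext h0), by ext; rfl⟩

variable {V W : Set X} {n : ℕ}

theorem exists_cycle_lift_zero (π : F →+ G) {c₀ : SChain X F 0} (hc₀ : SCarrier c₀ ⊆ W)
    (hc : IsCycle X G (mapCoeff π c₀)) :
    ∃ c : SChain X F 0, SCarrier c ⊆ W ∧ IsCycle X F c ∧
      mapCoeff π c = mapCoeff π c₀ := by
  rcases c₀.support.eq_empty_or_nonempty with h0 | ⟨σ, hσ⟩
  · refine ⟨c₀, hc₀, ?_, rfl⟩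
    show SAug X F c₀ = 0
    rw [Finsupp.support_eq_empty.1 h0, map_zero]
  · refine ⟨c₀ - Finsupp.single σ (SAug X F c₀), SCarrier_sub_subset hc₀
      ((SCarrier_single_subset _ _).trans ((range_subset_SCarrier hσ).trans hc₀)), ?_, ?_⟩
    · show SAug X F _ = 0
      rw [map_sub, SAug_single, sub_self]
    · rw [map_sub, mapCoeff_single, ← SAug_mapCoeff, show SAug X G _ = 0 from hc,
        Finsupp.single_zero, sub_zero]

theorem exists_cycle_lift_succ (hp : HomTrivialPair ℤ V W n) {m : ℕ} (hm : m ≤ n)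
    {ι : Type*} [Finite ι] (b : Module.Basis ι ℤ F) (π : F →ₗ[ℤ] G)
    {c₀ : SChain X F (m + 1)} (hc₀V : SCarrier c₀ ⊆ V) (hc₀W : SCarrier c₀ ⊆ W)
    (hc : IsCycle X G (mapCoeff π.toAddMonoidHom c₀)) :
    ∃ c : SChain X F (m + 1), SCarrier c ⊆ W ∧ IsCycle X F c ∧
      mapCoeff π.toAddMonoidHom c = mapCoeff π.toAddMonoidHom c₀ := by
  let K := LinearMap.ker π
  let i := K.subtype.toAddMonoidHom
  have hi : Function.Injective i := Subtype.val_injective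
  have hK : ∀ τ, SBoundary X F m c₀ τ ∈ K := by
    have h0 : mapCoeff π.toAddMonoidHom (SBoundary X F m c₀) = 0 :=
      (SBoundary_mapCoeff _ c₀).symm.trans hc
    exact fun τ => LinearMap.mem_ker.2 (DFunLike.congr_fun h0 τ)
  obtain ⟨d, hd⟩ := K.exists_mapCoeff_subtype_eq hK
  have hdV : SCarrier d ⊆ V := by
    rw [← SCarrier_mapCoeff_of_injective hi, hd]
    exact (SCarrier_SBoundary_subset c₀).trans hc₀V
  have hdcyc : IsCycle X K d := isCycle_of_mapCoeff hi (hd ▸ isCycle_SBoundary c₀)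
  obtain ⟨r, bK⟩ := Submodule.basisOfPid b K
  obtain ⟨e, heW, he⟩ := hp.of_addEquiv_pi bK.equivFun.toAddEquiv m hm d hdV hdcyc
  refine ⟨c₀ - mapCoeff i e,
    SCarrier_sub_subset hc₀W ((SCarrier_mapCoeff_subset i e).trans heW), ?_, ?_⟩
  · show SBoundary X F m _ = 0
    rw [map_sub, SBoundary_mapCoeff, he, hd, sub_self]
  · have hπi : mapCoeff π.toAddMonoidHom (mapCoeff i e) = 0 := by ext σ; exact (e σ).2
    rw [map_sub, hπi, sub_zero]

theorem exists_cycle_lift (hp : HomTrivialPair ℤ V W n) (hVW : V ⊆ W) {k : ℕ}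
    (hk : k ≤ n + 1) {ι : Type*} [Finite ι] (b : Module.Basis ι ℤ F) (π : F →ₗ[ℤ] G)
    {c₀ : SChain X F k} (hc₀ : SCarrier c₀ ⊆ V)
    (hc : IsCycle X G (mapCoeff π.toAddMonoidHom c₀)) :
    ∃ c : SChain X F k, SCarrier c ⊆ W ∧ IsCycle X F c ∧
      mapCoeff π.toAddMonoidHom c = mapCoeff π.toAddMonoidHom c₀ := by
  cases k with
  | zero => exact exists_cycle_lift_zero _ (hc₀.trans hVW) hc
  | succ m => exact exists_cycle_lift_succ hp (by omega) b π hc₀ (hc₀.trans hVW) hc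

theorem HomTrivialPair.of_int {U : Set X} (hV : HomTrivialPair ℤ V W n) (hVW : V ⊆ W)
    (hW : HomTrivialPair ℤ W U n) (G : Type v) [AddCommGroup G] : HomTrivialPair G V U n := by
  intro k hk c hcV hc
  obtain ⟨π, c₀, hc₀, hc₀c⟩ := exists_mapCoeff_eq c
  rw [← hc₀c] at hc
  obtain ⟨c', hc'W, hc', hc'c⟩ :=
    exists_cycle_lift hV hVW (by omega) (Pi.basisFun ℤ c.support) π (hc₀.trans hcV) hc
  obtain ⟨b, hbU, hb⟩ := HomTrivialPair.pi (fun _ => hW) k hk c' hc'W hc'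
  exact ⟨mapCoeff π.toAddMonoidHom b, (SCarrier_mapCoeff_subset _ b).trans hbU,
    by rw [SBoundary_mapCoeff, hb, hc'c, hc₀c]⟩

end Lifting

theorem statement_17_general {X : Type u} [TopologicalSpace X] (n : ℕ) (A : Set X)
    (h : IsUVSet ℤ n A) (G : Type v) [AddCommGroup G] :
    IsUVSet G n A := by
  intro U hU
  obtain ⟨V₁, hV₁, hV₁U, hp₁⟩ := h U hU
  obtain ⟨V₂, hV₂, hV₂V₁, hp₂⟩ := h V₁ hV₁
  exact ⟨V₂, hV₂, hV₂V₁.trans hV₁U, hp₂.of_int hV₂V₁ hp₁ G⟩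

/-- If a closed subset `A` of a space `X` is homologically `UV^n(ℤ)`,
then `A` is homologically `UV^n(G)` for every coefficient group `G`. -/
theorem statement_17 {X : Type u} [TopologicalSpace X] (n : ℕ) (A : Set X)
    (hA : IsClosed A) (h : IsUVSet ℤ n A) (G : Type v) [AddCommGroup G] :
    IsUVSet G n A :=
  statement_17_general n A h G
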